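/- arXiv:2512.00682 — 2 statements merged into one kernel-verified Lean document; each statement's English description precedes it below -/
import Mathlib

section
/- Spider fusion is sound at the level of linear-map semantics: for all natural numbers m, n and all k ≥ 1, and all real numbers α, β, the matrix product Z_{k,n}(β) · Z_{m,k}(α) equals Z_{m,n}(α + β). -/
open Complex

/-- The Z-spider matrix `Z_{m,n}(θ)`: the matrix of
`|0⟩^{⊗n}⟨0|^{⊗m} + e^{iθ}|1⟩^{⊗n}⟨1|^{⊗m}`, with rows indexed by `Fin n → Fin 2` and
columns indexed by `Fin m → Fin 2`. -/
noncomputable def Zspider (m n : ℕ) (θ : ℝ) :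
    Matrix (Fin n → Fin 2) (Fin m → Fin 2) ℂ :=
  fun y x =>
    (if (∀ j, y j = 0) ∧ (∀ i, x i = 0) then 1 else 0)
      + (if (∀ j, y j = 1) ∧ (∀ i, x i = 1) then Complex.exp (θ * Complex.I) else 0)

/-- Spider fusion is sound at the level of linear-map semantics: for `k ≥ 1`,
`Z_{k,n}(β) · Z_{m,k}(α) = Z_{m,n}(α + β)`. -/
theorem Zspider_fusion (m n k : ℕ) (hk : 1 ≤ k) (α β : ℝ) :
    Zspider k n β * Zspider m k α = Zspider m n (α + β) := by
  ext y x
  rw [Matrix.mul_apply]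
  have key : ∀ z : Fin k → Fin 2,
      Zspider k n β y z * Zspider m k α z x =
      (if z = (fun _ => 0) then (if (∀ j, y j = 0) ∧ (∀ i, x i = 0) then 1 else 0) else 0)
      + (if z = (fun _ => 1) then (if (∀ j, y j = 1) ∧ (∀ i, x i = 1)
            then Complex.exp (β * Complex.I) * Complex.exp (α * Complex.I) else 0) else 0) := by
    intro z
    have h0 : (z = fun _ => 0) ↔ ∀ i, z i = 0 := funext_iff
    have h1 : (z = fun _ => 1) ↔ ∀ i, z i = 1 := funext_iff
    by_cases hz0 : ∀ i, z i = 0 <;> by_cases hz1 : ∀ i, z i = 1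
    · exact absurd ((hz0 ⟨0, hk⟩).symm.trans (hz1 ⟨0, hk⟩)) (by decide)
    · simp only [Zspider, h0, h1, eq_true hz0, eq_false hz1, and_true, and_false,
        true_and, false_and, if_true, if_false]
      try split_ifs
      all_goals (first | ring1 | tauto)
    · simp only [Zspider, h0, h1, eq_false hz0, eq_true hz1, and_true, and_false,
        true_and, false_and, if_true, if_false]
      try split_ifs
      all_goals (first | ring1 | tauto)
    · simp only [Zspider, h0, h1, eq_false hz0, eq_false hz1, and_true, and_false,
        true_and, false_and, if_true, if_false]
      try split_ifs
      all_goals (first | ring1 | tauto)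
  rw [Finset.sum_congr rfl fun z _ => key z, Finset.sum_add_distrib,
    Finset.sum_ite_eq' Finset.univ (fun _ => (0 : Fin 2)),
    Finset.sum_ite_eq' Finset.univ (fun _ => (1 : Fin 2))]
  simp only [Finset.mem_univ, if_true, Zspider]
  congr 1
  split
  · rw [← Complex.exp_add]
    push_cast
    ring_nf
  · rfl
end

section
/- X-spider fusion is sound: for natural numbers m, n and k ≥ 1, define the m-fold Hadamard matrix H^{⊗m} as the complex matrix indexed by functions Fin m → Fin 2 with (x,y) entry 2^{−m/2}·(−1)^{Σᵢ xᵢ·yᵢ}, and define the X-spider matrix X_{m,n}(θ) := H^{⊗n} · Z_{m,n}(θ) · H^{⊗m}. Then for all real α, β, the product X_{k,n}(β) · X_{m,k}(α) equals X_{m,n}(α + β). -/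
open Complex

/-- The `m`-fold Hadamard matrix `H^{⊗m}`, with `(x,y)` entry
`2^{−m/2}·(−1)^{Σᵢ xᵢ·yᵢ}` (components of `Fin 2` read as the integers `0`, `1`). -/
noncomputable def Hpow (m : ℕ) : Matrix (Fin m → Fin 2) (Fin m → Fin 2) ℂ :=
  fun x y =>
    (((2 : ℝ) ^ (-(m : ℝ) / 2) : ℝ) : ℂ) * (-1 : ℂ) ^ (∑ i, (x i : ℕ) * (y i : ℕ))

/-- The X-spider matrix `X_{m,n}(θ) := H^{⊗n} · Z_{m,n}(θ) · H^{⊗m}`. -/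
noncomputable def Xspider (m n : ℕ) (θ : ℝ) :
    Matrix (Fin n → Fin 2) (Fin m → Fin 2) ℂ :=
  Hpow n * Zspider m n θ * Hpow m

open Matrix

/-! Since `H^{⊗k}` is an involution, the two inner Hadamard layers cancel and X-spider fusion
reduces to Z-spider fusion. Writing `Z_{m,n}(θ) = |0ⁿ⟩⟨0ᵐ| + e^{iθ} |1ⁿ⟩⟨1ᵐ|`, the product
`Z_{k,n}(β) Z_{m,k}(α)` collapses because `|0ᵏ⟩` and `|1ᵏ⟩` are orthonormal once `k ≥ 1`,
leaving the phase `e^{iβ} e^{iα} = e^{i(α+β)}`. -/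

lemma sum_fin_two_neg_one_pow_mul_neg_one_pow (u v : Fin 2) :
    ∑ a : Fin 2, (-1 : ℂ) ^ ((u : ℕ) * a) * (-1) ^ ((a : ℕ) * v) = if u = v then 2 else 0 := by
  fin_cases u <;> fin_cases v <;> norm_num [Fin.sum_univ_two]

lemma sum_neg_one_pow_sum_mul_neg_one_pow_sum {m : ℕ} (x z : Fin m → Fin 2) :
    ∑ y : Fin m → Fin 2,
        (-1 : ℂ) ^ (∑ i, (x i : ℕ) * y i) * (-1) ^ (∑ i, (y i : ℕ) * z i) =
      if x = z then 2 ^ m else 0 := by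
  simp_rw [← Finset.prod_pow_eq_pow_sum, ← Finset.prod_mul_distrib]
  rw [← Fintype.prod_sum fun i (a : Fin 2) => (-1 : ℂ) ^ ((x i : ℕ) * a) * (-1) ^ ((a : ℕ) * z i)]
  simp only [sum_fin_two_neg_one_pow_mul_neg_one_pow, Finset.prod_ite_zero, funext_iff]
  simp

lemma Hpow_mul_self (m : ℕ) : Hpow m * Hpow m = 1 := by
  have hnorm : (2 : ℝ) ^ (-(m : ℝ) / 2) * 2 ^ (-(m : ℝ) / 2) * 2 ^ m = 1 := by
    rw [← Real.rpow_natCast, ← Real.rpow_add two_pos, ← Real.rpow_add two_pos]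
    norm_num
  ext x z
  simp_rw [mul_apply, Hpow, mul_mul_mul_comm, ← Finset.mul_sum,
    sum_neg_one_pow_sum_mul_neg_one_pow_sum, one_apply]
  split_ifs
  · exact_mod_cast hnorm
  · exact mul_zero _

lemma Zspider_eq_vecMulVec (m n : ℕ) (θ : ℝ) :
    Zspider m n θ = vecMulVec (Pi.single 0 1) (Pi.single 0 1)
      + cexp (θ * I) • vecMulVec (Pi.single 1 1) (Pi.single 1 1) := by
  ext y x
  simp only [Zspider, vecMulVec, Pi.single_apply, ite_zero_mul_ite_zero, one_mul, ← funext_iff,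
    ← Pi.zero_def, ← Pi.one_def]
  simp [ite_and]

lemma Zspider_mul_Zspider (m n k : ℕ) [NeZero k] (α β : ℝ) :
    Zspider k n β * Zspider m k α = Zspider m n (α + β) := by
  have h01 : (0 : Fin k → Fin 2) ≠ 1 := fun h => zero_ne_one (congrFun h 0)
  simp only [Zspider_eq_vecMulVec, Matrix.add_mul, Matrix.mul_add, Matrix.smul_mul,
    Matrix.mul_smul, vecMulVec_mul_vecMulVec, dotProduct_single, Pi.single_eq_same,
    Pi.single_eq_of_ne h01, Pi.single_eq_of_ne h01.symm, mul_one, vecMulVec_smul, one_smul]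
  simp only [zero_smul, smul_zero, add_zero, zero_add, smul_smul]
  rw [ofReal_add, add_mul, exp_add]

/-- X-spider fusion is sound: for `k ≥ 1`,
`X_{k,n}(β) · X_{m,k}(α) = X_{m,n}(α + β)`. -/
theorem Xspider_fusion (m n k : ℕ) (hk : 1 ≤ k) (α β : ℝ) :
    Xspider k n β * Xspider m k α = Xspider m n (α + β) := by
  have : NeZero k := ⟨by omega⟩
  calc Xspider k n β * Xspider m k α
      = Hpow n * Zspider k n β * (Hpow k * Hpow k) * Zspider m k α * Hpow m := by
        simp only [Xspider, Matrix.mul_assoc]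
    _ = Xspider m n (α + β) := by
        rw [Hpow_mul_self, Matrix.mul_one, Matrix.mul_assoc _ (Zspider k n β),
          Zspider_mul_Zspider, Xspider]
end
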